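/- arXiv:2305.11716 — 6 statements merged into one kernel-verified Lean document; each statement's English description precedes it below -/
import Mathlib

section
/- Let d_a, d_b ∈ ℝ² with ‖d_a‖ ≤ π/2 and ‖d_b‖ ≤ π/2, and let r(d_a), r(d_b) ∈ ℝ³ be their images under the exponential mapping. Then the undirected angle between r(d_a) and r(d_b) satisfies ∠(r(d_a), r(d_b)) ≤ ‖d_a − d_b‖. -/
open scoped RealInnerProductSpace
open Real Set

/-- The exponential mapping from the closed disk of radius `π/2` in `ℝ²`
to the upper unit hemisphere of `ℝ³`. -/
noncomputable def expMap (d : EuclideanSpace ℝ (Fin 2)) : EuclideanSpace ℝ (Fin 3) :=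
  (WithLp.equiv 2 (Fin 3 → ℝ)).symm
    ![Real.sin ‖d‖ * (d 0 / ‖d‖), Real.sin ‖d‖ * (d 1 / ‖d‖), Real.cos ‖d‖]


lemma sin_sub_mul_cos_nonneg {s : ℝ} (h0 : 0 ≤ s) (h : s ≤ π) :
    0 ≤ Real.sin s - s * Real.cos s := by
  rcases lt_or_ge s (π/2) with hs | hs
  · rcases eq_or_lt_of_le h0 with rfl | h0'
    · simp
    · have ht := Real.lt_tan h0' hs
      have hc : 0 < Real.cos s := Real.cos_pos_of_mem_Ioo ⟨by linarith [Real.pi_pos], hs⟩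
      rw [Real.tan_eq_sin_div_cos, lt_div_iff₀ hc] at ht
      nlinarith
  · have hc : Real.cos s ≤ 0 := Real.cos_nonpos_of_pi_div_two_le_of_le hs (by linarith [Real.pi_pos])
    have hsin : 0 ≤ Real.sin s := Real.sin_nonneg_of_nonneg_of_le_pi h0 h
    nlinarith

lemma convexOn_cos_sqrt : ConvexOn ℝ (Icc (0:ℝ) (π^2)) (fun x => Real.cos (Real.sqrt x)) := by
  have hD : Convex ℝ (Icc (0:ℝ) (π^2)) := convex_Icc _ _
  set f : ℝ → ℝ := fun x => Real.cos (Real.sqrt x) with hf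
  set g : ℝ → ℝ := fun x => -(Real.sin (Real.sqrt x) * (2 * Real.sqrt x)⁻¹) with hg
  have hderiv : ∀ x : ℝ, 0 < x → HasDerivAt f (g x) x := by
    intro x hx
    have h1 := Real.hasDerivAt_sqrt (ne_of_gt hx)
    have h2 := (Real.hasDerivAt_cos (Real.sqrt x)).comp x h1
    exact h2.congr_deriv (by simp [hg, div_eq_mul_inv])
  have hgderiv : ∀ x : ℝ, 0 < x → x < π^2 →
      HasDerivAt g ((Real.sin (Real.sqrt x) - Real.sqrt x * Real.cos (Real.sqrt x)) /
        (4 * x * Real.sqrt x)) x := by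
    intro x hx _
    obtain ⟨s, hs0, rfl⟩ : ∃ s, 0 < s ∧ s ^ 2 = x := ⟨_, Real.sqrt_pos.mpr hx, Real.sq_sqrt hx.le⟩
    have hss : Real.sqrt (s ^ 2) = s := Real.sqrt_sq hs0.le
    have h1 := Real.hasDerivAt_sqrt (ne_of_gt hx)
    have hsin := (Real.hasDerivAt_sin (Real.sqrt (s ^ 2))).comp (s ^ 2) h1
    have hc : HasDerivAt (fun y => 2 * Real.sqrt y) (2 * (1 / (2 * Real.sqrt (s ^ 2)))) (s ^ 2) :=
      h1.const_mul 2
    have hinv := hc.inv (by rw [hss]; positivity)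
    have h5 := (hsin.mul hinv).neg
    exact h5.congr_deriv (by
      simp only [hss, Function.comp, Pi.inv_apply]
      field_simp
      ring)
  have hderivEq : ∀ x ∈ Ioi (0:ℝ), deriv f x = g x := fun x hx => (hderiv x hx).deriv
  apply convexOn_of_deriv2_nonneg hD
  · exact (Real.continuous_cos.comp Real.continuous_sqrt).continuousOn
  · rw [interior_Icc]
    exact fun x hx => ((hderiv x hx.1).differentiableAt).differentiableWithinAt
  · rw [interior_Icc]
    intro x hx
    have : DifferentiableAt ℝ g x := (hgderiv x hx.1 hx.2).differentiableAt
    have heq : deriv f =ᶠ[nhds x] g :=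
      Filter.eventuallyEq_of_mem (Ioi_mem_nhds hx.1) hderivEq
    exact (this.congr_of_eventuallyEq heq).differentiableWithinAt
  · rw [interior_Icc]
    intro x hx
    have heq : deriv f =ᶠ[nhds x] g :=
      Filter.eventuallyEq_of_mem (Ioi_mem_nhds hx.1) hderivEq
    have : deriv (deriv f) x = deriv g x := heq.deriv_eq
    rw [Function.iterate_succ, Function.iterate_one, Function.comp_apply, this,
      (hgderiv x hx.1 hx.2).deriv]
    have hsx : 0 < Real.sqrt x := Real.sqrt_pos.mpr hx.1
    have hsle : Real.sqrt x ≤ π := by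
      rw [show π = Real.sqrt (π^2) by rw [Real.sqrt_sq Real.pi_pos.le]]
      exact Real.sqrt_le_sqrt hx.2.le
    have h4 : (0:ℝ) ≤ 4 * x * Real.sqrt x := mul_nonneg (mul_nonneg (by norm_num) hx.1.le) (Real.sqrt_nonneg x)
    exact div_nonneg (sin_sub_mul_cos_nonneg hsx.le hsle) h4



lemma key_ineq {a b w : ℝ} (ha0 : 0 ≤ a) (ha : a ≤ π/2) (hb0 : 0 ≤ b) (hb : b ≤ π/2)
    (hw1 : -1 ≤ w) (hw2 : w ≤ 1) :
    Real.cos (Real.sqrt (a^2 + b^2 - 2*(a*b*w))) ≤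
      Real.cos a * Real.cos b + Real.sin a * Real.sin b * w := by
  have hpi := Real.pi_pos
  set t : ℝ := (1 - w) / 2 with ht
  have ht0 : 0 ≤ t := by simp [ht]; linarith
  have ht1 : 1 - t ≥ 0 := by simp [ht]; linarith
  have hx1 : (a - b)^2 ∈ Icc (0:ℝ) (π^2) := by
    constructor
    · positivity
    · nlinarith [abs_nonneg (a-b)]
  have hx2 : (a + b)^2 ∈ Icc (0:ℝ) (π^2) := by
    constructor
    · positivity
    · nlinarith
  have hcvx := convexOn_cos_sqrt.2 hx1 hx2 ht1 ht0 (by ring)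
  simp only [smul_eq_mul] at hcvx
  have e1 : (1 - t) * (a - b)^2 + t * (a + b)^2 = a^2 + b^2 - 2*(a*b*w) := by
    rw [ht]; ring
  have e2 : Real.sqrt ((a-b)^2) = |a - b| := Real.sqrt_sq_eq_abs _
  have e3 : Real.sqrt ((a+b)^2) = a + b := Real.sqrt_sq (by linarith)
  rw [e1, e2, e3, Real.cos_abs, Real.cos_sub, Real.cos_add] at hcvx
  calc Real.cos (Real.sqrt (a^2 + b^2 - 2*(a*b*w)))
      ≤ (1-t) * (Real.cos a * Real.cos b + Real.sin a * Real.sin b)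
        + t * (Real.cos a * Real.cos b - Real.sin a * Real.sin b) := hcvx
    _ = Real.cos a * Real.cos b + Real.sin a * Real.sin b * w := by rw [ht]; ring

lemma inner_expMap (x y : EuclideanSpace ℝ (Fin 2)) :
    ⟪expMap x, expMap y⟫ =
      Real.sin ‖x‖ * Real.sin ‖y‖ * ((x 0 / ‖x‖) * (y 0 / ‖y‖) + (x 1 / ‖x‖) * (y 1 / ‖y‖))
      + Real.cos ‖x‖ * Real.cos ‖y‖ := by
  simp only [expMap, PiLp.inner_apply, RCLike.inner_apply, conj_trivial,
    WithLp.equiv_symm_apply, PiLp.toLp_apply, Fin.sum_univ_three, Matrix.cons_val_zero, Matrix.cons_val_one,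
    Matrix.head_cons, Matrix.cons_val_two, Matrix.tail_cons]
  ring

lemma inner_two (x y : EuclideanSpace ℝ (Fin 2)) : ⟪x, y⟫ = x 0 * y 0 + x 1 * y 1 := by
  simp only [PiLp.inner_apply, RCLike.inner_apply, conj_trivial, Fin.sum_univ_two]
  ring

lemma norm_sq_two (x : EuclideanSpace ℝ (Fin 2)) : ‖x‖^2 = x 0 ^2 + x 1 ^2 := by
  rw [← real_inner_self_eq_norm_sq, inner_two]; ring

lemma norm_expMap (x : EuclideanSpace ℝ (Fin 2)) : ‖expMap x‖ = 1 := by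
  have h : ⟪expMap x, expMap x⟫ = 1 := by
    rw [inner_expMap]
    rcases eq_or_ne x 0 with rfl | hx
    · simp
    · have hn : ‖x‖ ≠ 0 := norm_ne_zero_iff.mpr hx
      have h2 : x 0 ^2 + x 1 ^2 = ‖x‖^2 := (norm_sq_two x).symm
      have hpyth := Real.sin_sq_add_cos_sq ‖x‖
      field_simp
      nlinarith [hpyth]
  have := real_inner_self_eq_norm_sq (expMap x)
  rw [h] at this
  nlinarith [norm_nonneg (expMap x)]

theorem angle_expMap_le_norm_sub (da db : EuclideanSpace ℝ (Fin 2))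
    (ha : ‖da‖ ≤ Real.pi / 2) (hb : ‖db‖ ≤ Real.pi / 2) :
    InnerProductGeometry.angle (expMap da) (expMap db) ≤ ‖da - db‖ := by
  set a := ‖da‖ with hadef
  set b := ‖db‖ with hbdef
  have ha0 : 0 ≤ a := norm_nonneg da
  have hb0 : 0 ≤ b := norm_nonneg db
  set w : ℝ := ⟪da, db⟫ / (a * b) with hw
  have hinner_ab : ⟪da, db⟫ = a * b * w := by
    rcases eq_or_ne da 0 with rfl | hda
    · have h0 : a = 0 := by simp [hadef]
      rw [h0]; simp
    rcases eq_or_ne db 0 with rfl | hdb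
    · have h0 : b = 0 := by simp [hbdef]
      rw [h0]; simp
    have : a * b ≠ 0 := by
      simp [hadef, hbdef, norm_ne_zero_iff.mpr hda, norm_ne_zero_iff.mpr hdb]
    rw [hw]; exact (mul_div_cancel₀ _ this).symm
  have hwabs : |w| ≤ 1 := by
    rcases eq_or_ne (a * b) 0 with h | h
    · simp [hw, h]
    · have hab : 0 < a * b := lt_of_le_of_ne (mul_nonneg ha0 hb0) (Ne.symm h)
      rw [hw, abs_div, abs_of_pos hab, div_le_one hab]
      exact abs_real_inner_le_norm da db
  have hw1 : -1 ≤ w := neg_le_of_abs_le hwabs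
  have hw2 : w ≤ 1 := le_of_abs_le hwabs
  -- the inner product of the images
  have hI : ⟪expMap da, expMap db⟫ = Real.cos a * Real.cos b + Real.sin a * Real.sin b * w := by
    rw [inner_expMap]
    rcases eq_or_ne da 0 with rfl | hda
    · have h0 : a = 0 := by simp [hadef]
      rw [h0]; simp [hbdef]
    rcases eq_or_ne db 0 with rfl | hdb
    · have h0 : b = 0 := by simp [hbdef]
      rw [h0]; simp [hadef]
    have hna : a ≠ 0 := by simpa [hadef] using norm_ne_zero_iff.mpr hda
    have hnb : b ≠ 0 := by simpa [hbdef] using norm_ne_zero_iff.mpr hdb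
    have : (da 0 / a) * (db 0 / b) + (da 1 / a) * (db 1 / b) = w := by
      rw [hw, inner_two]
      field_simp
    rw [this]; ring
  -- the norm of the difference
  have hc : ‖da - db‖ = Real.sqrt (a^2 + b^2 - 2*(a*b*w)) := by
    have h1 : ‖da - db‖^2 = a^2 + b^2 - 2*(a*b*w) := by
      rw [← hinner_ab, hadef, hbdef, @norm_sub_sq_real]; ring
    rw [← h1, Real.sqrt_sq (norm_nonneg _)]
  have hcle : ‖da - db‖ ≤ π := by
    rw [hc]
    have : a^2 + b^2 - 2*(a*b*w) ≤ π^2 := by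
      nlinarith [Real.pi_pos, mul_nonneg ha0 hb0, sq_nonneg (a+b), sq_nonneg (a-b)]
    calc Real.sqrt (a^2 + b^2 - 2*(a*b*w)) ≤ Real.sqrt (π^2) := Real.sqrt_le_sqrt this
      _ = π := Real.sqrt_sq Real.pi_pos.le
  have hkey : Real.cos ‖da - db‖ ≤ ⟪expMap da, expMap db⟫ := by
    rw [hI, hc]
    exact key_ineq ha0 ha hb0 hb hw1 hw2
  -- conclude via arccos
  have harccos_mono : ∀ x y : ℝ, x ≤ y → Real.arccos y ≤ Real.arccos x := by
    intro x y hxy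
    simp only [Real.arccos]
    have := Real.monotone_arcsin hxy
    linarith
  rw [InnerProductGeometry.angle, norm_expMap, norm_expMap, mul_one, div_one]
  calc Real.arccos ⟪expMap da, expMap db⟫ ≤ Real.arccos (Real.cos ‖da - db‖) :=
        harccos_mono _ _ hkey
    _ = ‖da - db‖ := Real.arccos_cos (norm_nonneg _) hcle
end

section
/- Let r and r^c be unit vectors in ℝ³, let p ∈ ℝ³, and let α ≥ 0 satisfy ∠(r, r^c) ≤ α. Then ‖p‖·cos(min{∠(r^c, p) + α, π}) ≤ ⟪r, p⟫ ≤ ‖p‖·cos(max{∠(r^c, p) − α, 0}). -/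
open InnerProductGeometry
open scoped RealInnerProductSpace

private lemma sin_angle_nonneg' {V : Type*} [NormedAddCommGroup V] [InnerProductSpace ℝ V]
    (x y : V) : 0 ≤ Real.sin (angle x y) :=
  Real.sin_nonneg_of_nonneg_of_le_pi (angle_nonneg x y) (angle_le_pi x y)

/-- Key inequality: spherical triangle inequality in cosine form. -/
private lemma key {V : Type*} [NormedAddCommGroup V] [InnerProductSpace ℝ V]
    {u v : V} (hu : ‖u‖ = 1) (hv : ‖v‖ = 1) (w : V) :
    ‖w‖ * Real.cos (angle u v + angle v w) ≤ ⟪u, w⟫ := by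
  set a := angle u v
  set b := angle v w
  set c1 : ℝ := ⟪u, v⟫ with hc1
  set c2 : ℝ := ⟪v, w⟫ with hc2
  have hca : Real.cos a = c1 := by
    rw [cos_angle, hu, hv]; simp; exact hc1.symm
  have hcb : Real.cos b * ‖w‖ = c2 := by
    have := cos_angle_mul_norm_mul_norm v w
    rwa [hv, one_mul] at this
  have hnu : ‖u - c1 • v‖ ^ 2 = 1 - c1 ^ 2 := by
    rw [norm_sub_sq_real, real_inner_smul_right, norm_smul, hu, hv]
    simp [Real.norm_eq_abs, mul_pow, sq_abs]
    ring
  have hnw : ‖w - c2 • v‖ ^ 2 = ‖w‖ ^ 2 - c2 ^ 2 := by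
    have hwv : (⟪w, v⟫ : ℝ) = c2 := by rw [hc2]; exact (real_inner_comm w v).symm
    rw [norm_sub_sq_real, real_inner_smul_right, norm_smul, hv, hwv]
    simp [Real.norm_eq_abs, mul_pow, sq_abs]
    ring
  have hsa : Real.sin a = ‖u - c1 • v‖ := by
    have h1 : Real.sin a ^ 2 = ‖u - c1 • v‖ ^ 2 := by
      rw [hnu, Real.sin_sq, hca]
    rw [← Real.sqrt_sq (sin_angle_nonneg' u v), h1, Real.sqrt_sq (norm_nonneg _)]
  have hsb : Real.sin b * ‖w‖ = ‖w - c2 • v‖ := by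
    have h1 : (Real.sin b * ‖w‖) ^ 2 = ‖w - c2 • v‖ ^ 2 := by
      rw [hnw, mul_pow, Real.sin_sq]
      have : Real.cos b ^ 2 * ‖w‖ ^ 2 = c2 ^ 2 := by
        rw [← mul_pow, hcb]
      nlinarith []
    have h2 : 0 ≤ Real.sin b * ‖w‖ := mul_nonneg (sin_angle_nonneg' v w) (norm_nonneg _)
    rw [← Real.sqrt_sq h2, h1, Real.sqrt_sq (norm_nonneg _)]
  have hexp : ⟪u - c1 • v, w - c2 • v⟫ = ⟪u, w⟫ - c1 * c2 := by
    have hvv : ⟪v, v⟫ = (1 : ℝ) := by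
      rw [real_inner_self_eq_norm_sq, hv]; norm_num
    have hwv : ⟪w, v⟫ = c2 := by rw [hc2]; exact (real_inner_comm w v).symm
    simp only [inner_sub_left, inner_sub_right, real_inner_smul_left, real_inner_smul_right,
      hvv, hwv, ← hc1, ← hc2]
    ring
  have hcs : -(‖u - c1 • v‖ * ‖w - c2 • v‖) ≤ ⟪u - c1 • v, w - c2 • v⟫ :=
    neg_le_of_abs_le (abs_real_inner_le_norm _ _)
  have : ‖w‖ * Real.cos (a + b) = c1 * c2 - ‖u - c1 • v‖ * ‖w - c2 • v‖ := by
    rw [Real.cos_add, ← hsa, ← hsb, ← hca]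
    linear_combination Real.cos a * hcb
  linarith [hexp ▸ hcs]

private lemma angle_triangle' {V : Type*} [NormedAddCommGroup V] [InnerProductSpace ℝ V]
    {u v : V} (hu : ‖u‖ = 1) (hv : ‖v‖ = 1) {w : V} (hw : w ≠ 0) :
    angle u w ≤ angle u v + angle v w := by
  by_cases hle : angle u v + angle v w ≤ Real.pi
  · have h1 := key hu hv w
    have h2 : ⟪u, w⟫ = ‖w‖ * Real.cos (angle u w) := by
      have := cos_angle_mul_norm_mul_norm u w
      rw [hu, one_mul] at this
      linarith
    have hwpos : 0 < ‖w‖ := norm_pos_iff.mpr hw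
    have hcos : Real.cos (angle u v + angle v w) ≤ Real.cos (angle u w) := by
      rw [h2] at h1
      exact le_of_mul_le_mul_left (by linarith) hwpos
    by_contra hcon
    push_neg at hcon
    have := Real.strictAntiOn_cos
      ⟨add_nonneg (angle_nonneg u v) (angle_nonneg v w), hle⟩
      ⟨angle_nonneg u w, angle_le_pi u w⟩ hcon
    linarith
  · push_neg at hle
    linarith [angle_le_pi u w]

theorem inner_bounds_of_angle_le (r rc : EuclideanSpace ℝ (Fin 3))
    (hr : ‖r‖ = 1) (hrc : ‖rc‖ = 1) (p : EuclideanSpace ℝ (Fin 3))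
    (α : ℝ) (hα : 0 ≤ α) (h : angle r rc ≤ α) :
    ‖p‖ * Real.cos (min (angle rc p + α) Real.pi) ≤ ⟪r, p⟫ ∧
      ⟪r, p⟫ ≤ ‖p‖ * Real.cos (max (angle rc p - α) 0) := by
  have hip : ⟪r, p⟫ = ‖p‖ * Real.cos (angle r p) := by
    have := cos_angle_mul_norm_mul_norm r p
    rw [hr, one_mul] at this
    linarith
  rcases eq_or_ne p 0 with rfl | hp
  · constructor
    · simp
    · simp
  have hppos : 0 < ‖p‖ := norm_pos_iff.mpr hp
  constructor
  · -- lower bound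
    rcases le_or_gt (angle rc p + α) Real.pi with hle | hlt
    · rw [min_eq_left hle]
      have h1 := key hr hrc p
      have h2 : Real.cos (angle rc p + α) ≤ Real.cos (angle r rc + angle rc p) := by
        apply Real.cos_le_cos_of_nonneg_of_le_pi (add_nonneg (angle_nonneg r rc) (angle_nonneg rc p)) hle
        linarith
      calc ‖p‖ * Real.cos (angle rc p + α) ≤ ‖p‖ * Real.cos (angle r rc + angle rc p) := by
            exact mul_le_mul_of_nonneg_left h2 (le_of_lt hppos)
        _ ≤ ⟪r, p⟫ := h1
    · rw [min_eq_right (le_of_lt hlt), Real.cos_pi]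
      have := neg_le_of_abs_le (abs_real_inner_le_norm r p)
      rw [hr, one_mul] at this
      linarith
  · -- upper bound
    have htri : angle rc p ≤ angle rc r + angle r p := by
      have := angle_triangle' hrc hr (w := p) hp
      exact this
    have hm : max (angle rc p - α) 0 ≤ angle r p := by
      apply max_le _ (angle_nonneg r p)
      have : angle rc r = angle r rc := angle_comm rc r
      linarith
    have hcos : Real.cos (angle r p) ≤ Real.cos (max (angle rc p - α) 0) := by
      exact Real.cos_le_cos_of_nonneg_of_le_pi (le_max_right _ _) (angle_le_pi r p) hm
    rw [hip]
    exact mul_le_mul_of_nonneg_left hcos (le_of_lt hppos)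
end

section
/- Let r^c be a unit vector in ℝ³, σ ≥ 0, ε ≥ 0, p ∈ ℝ³ and q ∈ ℝ. Set θ = ∠(r^c, p), t⁻ = −ε − ‖p‖·cos(max{θ − √2σ, 0}) + q and t⁺ = ε − ‖p‖·cos(min{θ + √2σ, π}) + q. If r is a unit vector with ∠(r, r^c) ≤ √2σ and t ∈ ℝ satisfies |⟪r, p⟫ + t − q| ≤ ε, then t⁻ ≤ t ≤ t⁺. -/
open InnerProductGeometry
open scoped RealInnerProductSpace

/-!
By the triangle inequality for angles, `angle r p` lies within `√2 σ` of `angle rc p`, and it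
stays in `[0, π]`. Since `⟪r, p⟫ = ‖p‖ cos (angle r p)` and `cos` is decreasing on
`[0, π]`, this confines `⟪r, p⟫`, and the residual bound `|⟪r, p⟫ + t - q| ≤ ε` transfers it to `t`.
-/

namespace InnerProductGeometry

variable {V : Type*} [NormedAddCommGroup V] [InnerProductSpace ℝ V]

theorem abs_angle_sub_angle_le_angle (x y z : V) : |angle x z - angle y z| ≤ angle x y := by
  rw [abs_sub_le_iff]
  constructor
  · linarith [angle_le_angle_add_angle x y z]
  · linarith [angle_le_angle_add_angle y x z, angle_comm x y]

theorem real_inner_eq_norm_mul_cos_angle_of_norm_eq_one {x : V} (hx : ‖x‖ = 1) (p : V) :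
    ⟪x, p⟫ = ‖p‖ * Real.cos (angle x p) := by
  rw [← cos_angle_mul_norm_mul_norm, hx]
  ring

variable {x y : V} {δ : ℝ}

theorem real_inner_le_norm_mul_cos_of_angle_le (hx : ‖x‖ = 1) (hxy : angle x y ≤ δ) (p : V) :
    ⟪x, p⟫ ≤ ‖p‖ * Real.cos (max (angle y p - δ) 0) := by
  have hclose := abs_sub_le_iff.mp (abs_angle_sub_angle_le_angle y x p)
  rw [real_inner_eq_norm_mul_cos_angle_of_norm_eq_one hx]
  refine mul_le_mul_of_nonneg_left ?_ (norm_nonneg p)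
  refine Real.cos_le_cos_of_nonneg_of_le_pi (le_max_right _ _) (angle_le_pi x p) ?_
  exact max_le (by linarith [angle_comm x y]) (angle_nonneg x p)

theorem norm_mul_cos_le_real_inner_of_angle_le (hx : ‖x‖ = 1) (hxy : angle x y ≤ δ) (p : V) :
    ‖p‖ * Real.cos (min (angle y p + δ) Real.pi) ≤ ⟪x, p⟫ := by
  have hclose := abs_sub_le_iff.mp (abs_angle_sub_angle_le_angle x y p)
  rw [real_inner_eq_norm_mul_cos_angle_of_norm_eq_one hx]
  refine mul_le_mul_of_nonneg_left ?_ (norm_nonneg p)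
  refine Real.cos_le_cos_of_nonneg_of_le_pi (angle_nonneg x p) (min_le_right _ _) ?_
  exact le_min (by linarith) (angle_le_pi x p)

end InnerProductGeometry

theorem residual_implies_interval_general (rc : EuclideanSpace ℝ (Fin 3))
    (σ ε : ℝ) (p : EuclideanSpace ℝ (Fin 3)) (q : ℝ)
    (r : EuclideanSpace ℝ (Fin 3)) (hr : ‖r‖ = 1)
    (hang : angle r rc ≤ Real.sqrt 2 * σ) (t : ℝ)
    (ht : |⟪r, p⟫ + t - q| ≤ ε) :
    -ε - ‖p‖ * Real.cos (max (angle rc p - Real.sqrt 2 * σ) 0) + q ≤ t ∧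
      t ≤ ε - ‖p‖ * Real.cos (min (angle rc p + Real.sqrt 2 * σ) Real.pi) + q := by
  have hupper := real_inner_le_norm_mul_cos_of_angle_le hr hang p
  have hlower := norm_mul_cos_le_real_inner_of_angle_le hr hang p
  obtain ⟨hres_lower, hres_upper⟩ := abs_le.mp ht
  constructor <;> linarith

theorem residual_implies_interval (rc : EuclideanSpace ℝ (Fin 3)) (hrc : ‖rc‖ = 1)
    (σ ε : ℝ) (hσ : 0 ≤ σ) (hε : 0 ≤ ε) (p : EuclideanSpace ℝ (Fin 3)) (q : ℝ)
    (r : EuclideanSpace ℝ (Fin 3)) (hr : ‖r‖ = 1)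
    (hang : angle r rc ≤ Real.sqrt 2 * σ) (t : ℝ)
    (ht : |⟪r, p⟫ + t - q| ≤ ε) :
    -ε - ‖p‖ * Real.cos (max (angle rc p - Real.sqrt 2 * σ) 0) + q ≤ t ∧
      t ≤ ε - ‖p‖ * Real.cos (min (angle rc p + Real.sqrt 2 * σ) Real.pi) + q :=
  residual_implies_interval_general rc σ ε p q r hr hang t ht
end

section
/- (Upper bound for S²⁺) Let {(p_i, q_i)}_{i∈I} be a finite family with p_i ∈ ℝ³ and q_i ∈ ℝ, let ε ≥ 0, let r^c be a unit vector in ℝ³ and σ ≥ 0. For each i set θ_i = ∠(r^c, p_i), t_i⁻ = −ε − ‖p_i‖·cos(max{θ_i − √2σ, 0}) + q_i and t_i⁺ = ε − ‖p_i‖·cos(min{θ_i + √2σ, π}) + q_i. Then for every unit vector r with ∠(r, r^c) ≤ √2σ and every t ∈ ℝ, the number of indices i with |⟪r, p_i⟫ + t − q_i| ≤ ε is at most the number of indices i with t_i⁻ ≤ t ≤ t_i⁺. In particular, the maximum over the sub-branch of the objective E(r,t) = card{i ∈ I : |⟪r,p_i⟫ + t − q_i| ≤ ε} is at most max_{t∈ℝ}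 card{i ∈ I : t ∈ [t_i⁻, t_i⁺]}. -/
open InnerProductGeometry
open scoped RealInnerProductSpace

private lemma angle_triangle_unit {V : Type*} [NormedAddCommGroup V] [InnerProductSpace ℝ V]
    {x y z : V} (hx : ‖x‖ = 1) (hy : ‖y‖ = 1) (hz : ‖z‖ = 1) :
    angle x z ≤ angle x y + angle y z := by
  set α := angle x y with hα
  set β := angle y z with hβ
  by_cases hπ : Real.pi ≤ α + β
  · exact le_trans (angle_le_pi x z) hπ
  push_neg at hπ
  have hα0 : 0 ≤ α := angle_nonneg x y
  have hβ0 : 0 ≤ β := angle_nonneg y z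
  have hαπ : α ≤ Real.pi := angle_le_pi x y
  have hβπ : β ≤ Real.pi := angle_le_pi y z
  set a := ⟪x, y⟫ with ha
  set b := ⟪y, z⟫ with hb
  have hcosα : Real.cos α = a := by
    rw [hα, cos_angle, hx, hy]; simp; exact ha.symm
  have hcosβ : Real.cos β = b := by
    rw [hβ, cos_angle, hy, hz]; simp; exact hb.symm
  have hyy : ⟪y, y⟫ = (1 : ℝ) := by
    rw [real_inner_self_eq_norm_sq, hy]; norm_num
  set x' := x - a • y with hx'
  set z' := z - b • y with hz'
  have hxx : ⟪x, x⟫ = (1 : ℝ) := by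
    rw [real_inner_self_eq_norm_sq, hx]; norm_num
  have hzz : ⟪z, z⟫ = (1 : ℝ) := by
    rw [real_inner_self_eq_norm_sq, hz]; norm_num
  have hinner : ⟪x, z⟫ = ⟪x', z'⟫ + a * b := by
    simp only [hx', hz', inner_sub_left, inner_sub_right, real_inner_smul_left,
      real_inner_smul_right, hyy]
    rw [real_inner_comm y x, ha, hb]
    rw [real_inner_comm y x]
    ring
  have hnx' : ‖x'‖ ^ 2 = 1 - a ^ 2 := by
    rw [← real_inner_self_eq_norm_sq]
    simp only [hx', inner_sub_left, inner_sub_right, real_inner_smul_left,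
      real_inner_smul_right, hyy, hxx]
    rw [real_inner_comm y x, ha]
    rw [real_inner_comm y x]
    ring
  have hnz' : ‖z'‖ ^ 2 = 1 - b ^ 2 := by
    rw [← real_inner_self_eq_norm_sq]
    simp only [hz', inner_sub_left, inner_sub_right, real_inner_smul_left,
      real_inner_smul_right, hyy, hzz]
    rw [real_inner_comm y z, hb]
    ring
  have hsinα : Real.sin α ^ 2 = 1 - a ^ 2 := by
    rw [Real.sin_sq, hcosα]
  have hsinβ : Real.sin β ^ 2 = 1 - b ^ 2 := by
    rw [Real.sin_sq, hcosβ]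
  have hnormx' : ‖x'‖ = Real.sin α := by
    rw [← Real.sqrt_sq (norm_nonneg x'), hnx', ← hsinα,
      Real.sqrt_sq (Real.sin_nonneg_of_nonneg_of_le_pi hα0 hαπ)]
  have hnormz' : ‖z'‖ = Real.sin β := by
    rw [← Real.sqrt_sq (norm_nonneg z'), hnz', ← hsinβ,
      Real.sqrt_sq (Real.sin_nonneg_of_nonneg_of_le_pi hβ0 hβπ)]
  have hcs : -(‖x'‖ * ‖z'‖) ≤ ⟪x', z'⟫ := neg_le_of_abs_le (abs_real_inner_le_norm x' z')
  have hkey : Real.cos (α + β) ≤ ⟪x, z⟫ := by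
    rw [Real.cos_add, hcosα, hcosβ, hinner]
    rw [hnormx', hnormz'] at hcs
    linarith
  by_contra hcon
  push_neg at hcon
  have h1 : Real.cos (angle x z) < Real.cos (α + β) :=
    Real.strictAntiOn_cos ⟨by linarith, le_of_lt hπ⟩
      ⟨by linarith [angle_nonneg x z], angle_le_pi x z⟩ hcon
  have h2 : Real.cos (angle x z) = ⟪x, z⟫ := by
    rw [cos_angle, hx, hz]; simp
  linarith

private lemma angle_triangle_aux {V : Type*} [NormedAddCommGroup V] [InnerProductSpace ℝ V]
    {x y : V} (z : V) (hx : ‖x‖ = 1) (hy : ‖y‖ = 1) :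
    angle x z ≤ angle x y + angle y z := by
  rcases eq_or_ne z 0 with rfl | hz
  · rw [angle_zero_right, angle_zero_right]
    linarith [angle_nonneg x y]
  · have hnz : 0 < ‖z‖ := norm_pos_iff.mpr hz
    have h1 : angle x z = angle x (‖z‖⁻¹ • z) := (angle_smul_right_of_pos x z (inv_pos.mpr hnz)).symm
    have h2 : angle y z = angle y (‖z‖⁻¹ • z) := (angle_smul_right_of_pos y z (inv_pos.mpr hnz)).symm
    rw [h1, h2]
    exact angle_triangle_unit hx hy (norm_smul_inv_norm hz)

open Classical in
theorem upper_bound_upper_hemisphere {I : Type*} [Fintype I]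
    (p : I → EuclideanSpace ℝ (Fin 3)) (q : I → ℝ) (ε : ℝ) (hε : 0 ≤ ε)
    (rc : EuclideanSpace ℝ (Fin 3)) (hrc : ‖rc‖ = 1) (σ : ℝ) (hσ : 0 ≤ σ) :
    ∀ r : EuclideanSpace ℝ (Fin 3), ‖r‖ = 1 → angle r rc ≤ Real.sqrt 2 * σ →
      ∀ t : ℝ,
        (Finset.univ.filter fun i => |⟪r, p i⟫ + t - q i| ≤ ε).card ≤
          (Finset.univ.filter fun i =>
            -ε - ‖p i‖ * Real.cos (max (angle rc (p i) - Real.sqrt 2 * σ) 0) + q i ≤ t ∧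
            t ≤ ε - ‖p i‖ * Real.cos (min (angle rc (p i) + Real.sqrt 2 * σ) Real.pi) + q i).card ∧
        (Finset.univ.filter fun i => |⟪r, p i⟫ + t - q i| ≤ ε).card ≤
          ⨆ s : ℝ, (Finset.univ.filter fun i =>
            -ε - ‖p i‖ * Real.cos (max (angle rc (p i) - Real.sqrt 2 * σ) 0) + q i ≤ s ∧
            s ≤ ε - ‖p i‖ * Real.cos (min (angle rc (p i) + Real.sqrt 2 * σ) Real.pi) + q i).card := by
  intro r hr hra t
  set δ := Real.sqrt 2 * σ with hδ
  have hδ0 : 0 ≤ δ := mul_nonneg (Real.sqrt_nonneg 2) hσ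
  have key : ∀ i : I, |⟪r, p i⟫ + t - q i| ≤ ε →
      (-ε - ‖p i‖ * Real.cos (max (angle rc (p i) - δ) 0) + q i ≤ t ∧
       t ≤ ε - ‖p i‖ * Real.cos (min (angle rc (p i) + δ) Real.pi) + q i) := by
    intro i hi
    rw [abs_le] at hi
    set θ := angle rc (p i) with hθ
    set A := angle r (p i) with hA
    have hA0 : 0 ≤ A := angle_nonneg r (p i)
    have hAπ : A ≤ Real.pi := angle_le_pi r (p i)
    have hθ0 : 0 ≤ θ := angle_nonneg rc (p i)
    have hθπ : θ ≤ Real.pi := angle_le_pi rc (p i)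
    have ht1 : θ ≤ angle rc r + A := angle_triangle_aux (p i) hrc hr
    have ht2 : A ≤ angle r rc + θ := angle_triangle_aux (p i) hr hrc
    have hcomm : angle rc r = angle r rc := angle_comm rc r
    have hlo : max (θ - δ) 0 ≤ A := by
      apply max_le _ hA0
      rw [hcomm] at ht1
      linarith
    have hhi : A ≤ min (θ + δ) Real.pi := by
      apply le_min _ hAπ
      linarith
    have hlo0 : 0 ≤ max (θ - δ) 0 := le_max_right _ _
    have hhiπ : min (θ + δ) Real.pi ≤ Real.pi := min_le_right _ _
    have hc1 : Real.cos A ≤ Real.cos (max (θ - δ) 0) :=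
      Real.cos_le_cos_of_nonneg_of_le_pi hlo0 hAπ hlo
    have hc2 : Real.cos (min (θ + δ) Real.pi) ≤ Real.cos A :=
      Real.cos_le_cos_of_nonneg_of_le_pi hA0 hhiπ hhi
    have hinner : ⟪r, p i⟫ = ‖p i‖ * Real.cos A := by
      have := cos_angle_mul_norm_mul_norm r (p i)
      rw [hr] at this
      rw [← this, ← hA]; ring
    have hp0 : 0 ≤ ‖p i‖ := norm_nonneg _
    constructor
    · have := mul_le_mul_of_nonneg_left hc1 hp0
      rw [hinner] at hi
      linarith [hi.1]
    · have := mul_le_mul_of_nonneg_left hc2 hp0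
      rw [hinner] at hi
      linarith [hi.2]
  have hsub : (Finset.univ.filter fun i => |⟪r, p i⟫ + t - q i| ≤ ε) ⊆
      (Finset.univ.filter fun i =>
        -ε - ‖p i‖ * Real.cos (max (angle rc (p i) - δ) 0) + q i ≤ t ∧
        t ≤ ε - ‖p i‖ * Real.cos (min (angle rc (p i) + δ) Real.pi) + q i) := by
    intro i hi
    rw [Finset.mem_filter] at hi ⊢
    exact ⟨hi.1, key i hi.2⟩
  have h1 := Finset.card_le_card hsub
  refine ⟨h1, h1.trans ?_⟩
  have hbdd : BddAbove (Set.range fun s : ℝ =>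
      (Finset.univ.filter fun i =>
        -ε - ‖p i‖ * Real.cos (max (angle rc (p i) - δ) 0) + q i ≤ s ∧
        s ≤ ε - ‖p i‖ * Real.cos (min (angle rc (p i) + δ) Real.pi) + q i).card) := by
    refine ⟨Fintype.card I, ?_⟩
    rintro n ⟨s, rfl⟩
    exact (Finset.card_filter_le _ _).trans (le_of_eq (Finset.card_univ))
  exact le_ciSup hbdd t
end

section
/- (Upper bound for S²⁻) Let {(p_i, q_i)}_{i∈I} be a finite family with p_i ∈ ℝ³ and q_i ∈ ℝ, let ε ≥ 0, let r^c be a unit vector in ℝ³ and σ ≥ 0. For each i set θ_i = ∠(r^c, p_i), s_i⁻ = −ε + ‖p_i‖·cos(min{θ_i + √2σ, π}) + q_i and s_i⁺ = ε + ‖p_i‖·cos(max{θ_i − √2σ, 0}) + q_i. Then for every unit vector r with ∠(r, r^c) ≤ √2σ and every t ∈ ℝ, the number of indices i with |⟪−r, p_i⟫ + t − q_i| ≤ ε is at most the number of indices i with s_i⁻ ≤ t ≤ s_i⁺. In particular, the maximum of the objective over the set of vectors −r with ∠(r, r^c) ≤ √2σ is at most max_{t∈ℝ} card{i ∈ I :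 t ∈ [s_i⁻, s_i⁺]}. -/
/-!
The angle between `r` and `p` differs from `θ = ∠(r^c, p)` by at most `∠(r, r^c) ≤ √2σ`, by the
triangle inequality for angles, so it lies in `[max (θ - √2σ) 0, min (θ + √2σ) π]`. Since `cos` is
antitone on `[0, π]` and `⟪r, p⟫ = ‖p‖ cos ∠(r, p)` for a unit vector `r`, this traps `⟪r, p⟫`, and
hence every inlier translation `t`, in the interval `[s⁻, s⁺]`.
-/

open InnerProductGeometry
open scoped RealInnerProductSpace

namespace InnerProductGeometry

variable {V : Type*} [NormedAddCommGroup V] [InnerProductSpace ℝ V]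

theorem cos_min_add_pi_le_cos_angle {r c p : V} {δ : ℝ} (h : angle r c ≤ δ) :
    Real.cos (min (angle c p + δ) Real.pi) ≤ Real.cos (angle r p) := by
  have htri := angle_le_angle_add_angle r c p
  exact Real.cos_le_cos_of_nonneg_of_le_pi (angle_nonneg r p) (min_le_right _ _)
    (le_min (by linarith) (angle_le_pi r p))

theorem cos_angle_le_cos_max_sub_zero {r c p : V} {δ : ℝ} (h : angle r c ≤ δ) :
    Real.cos (angle r p) ≤ Real.cos (max (angle c p - δ) 0) := by
  have htri := angle_le_angle_add_angle c r p
  rw [angle_comm c r] at htri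
  exact Real.cos_le_cos_of_nonneg_of_le_pi (le_max_right _ _) (angle_le_pi r p)
    (max_le (by linarith) (angle_nonneg r p))

theorem inner_eq_norm_mul_cos_angle_of_norm_eq_one {r : V} (hr : ‖r‖ = 1) (p : V) :
    ⟪r, p⟫ = ‖p‖ * Real.cos (angle r p) := by
  rw [← cos_angle_mul_norm_mul_norm, hr, one_mul, mul_comm]

theorem norm_mul_cos_min_add_pi_le_inner {r c p : V} {δ : ℝ} (hr : ‖r‖ = 1)
    (h : angle r c ≤ δ) : ‖p‖ * Real.cos (min (angle c p + δ) Real.pi) ≤ ⟪r, p⟫ := by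
  rw [inner_eq_norm_mul_cos_angle_of_norm_eq_one hr]
  exact mul_le_mul_of_nonneg_left (cos_min_add_pi_le_cos_angle h) (norm_nonneg p)

theorem inner_le_norm_mul_cos_max_sub_zero {r c p : V} {δ : ℝ} (hr : ‖r‖ = 1)
    (h : angle r c ≤ δ) : ⟪r, p⟫ ≤ ‖p‖ * Real.cos (max (angle c p - δ) 0) := by
  rw [inner_eq_norm_mul_cos_angle_of_norm_eq_one hr]
  exact mul_le_mul_of_nonneg_left (cos_angle_le_cos_max_sub_zero h) (norm_nonneg p)

end InnerProductGeometry

theorem translation_mem_bounds_of_inlier {V : Type*} [NormedAddCommGroup V]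
    [InnerProductSpace ℝ V] {r c p : V} {q ε δ t : ℝ} (hr : ‖r‖ = 1) (h : angle r c ≤ δ)
    (hinlier : |⟪-r, p⟫ + t - q| ≤ ε) :
    -ε + ‖p‖ * Real.cos (min (angle c p + δ) Real.pi) + q ≤ t ∧
      t ≤ ε + ‖p‖ * Real.cos (max (angle c p - δ) 0) + q := by
  rw [inner_neg_left, abs_le] at hinlier
  have hlower := norm_mul_cos_min_add_pi_le_inner (p := p) hr h
  have hupper := inner_le_norm_mul_cos_max_sub_zero (p := p) hr h
  constructor <;> linarith [hinlier.1, hinlier.2]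

theorem Finset.bddAbove_range_card {ι α : Type*} [Fintype α] (f : ι → Finset α) :
    BddAbove (Set.range fun s => (f s).card) :=
  ⟨Fintype.card α, Set.forall_mem_range.2 fun _ => card_le_univ _⟩

open Classical in
theorem upper_bound_lower_hemisphere_general {I : Type*} [Fintype I]
    (p : I → EuclideanSpace ℝ (Fin 3)) (q : I → ℝ) (ε : ℝ)
    (rc : EuclideanSpace ℝ (Fin 3)) (σ : ℝ) :
    ∀ r : EuclideanSpace ℝ (Fin 3), ‖r‖ = 1 → angle r rc ≤ Real.sqrt 2 * σ →
      ∀ t : ℝ,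
        (Finset.univ.filter fun i => |⟪-r, p i⟫ + t - q i| ≤ ε).card ≤
          (Finset.univ.filter fun i =>
            -ε + ‖p i‖ * Real.cos (min (angle rc (p i) + Real.sqrt 2 * σ) Real.pi) + q i ≤ t ∧
            t ≤ ε + ‖p i‖ * Real.cos (max (angle rc (p i) - Real.sqrt 2 * σ) 0) + q i).card ∧
        (Finset.univ.filter fun i => |⟪-r, p i⟫ + t - q i| ≤ ε).card ≤
          ⨆ s : ℝ, (Finset.univ.filter fun i =>
            -ε + ‖p i‖ * Real.cos (min (angle rc (p i) + Real.sqrt 2 * σ) Real.pi) + q i ≤ s ∧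
            s ≤ ε + ‖p i‖ * Real.cos (max (angle rc (p i) - Real.sqrt 2 * σ) 0) + q i).card := by
  intro r hr hangle t
  have hcard := Finset.card_le_card <| Finset.monotone_filter_right Finset.univ
    fun i _ => translation_mem_bounds_of_inlier (p := p i) (q := q i) (ε := ε) (t := t) hr hangle
  exact ⟨hcard, le_ciSup_of_le (Finset.bddAbove_range_card _) t hcard⟩

open Classical in
theorem upper_bound_lower_hemisphere {I : Type*} [Fintype I]
    (p : I → EuclideanSpace ℝ (Fin 3)) (q : I → ℝ) (ε : ℝ) (hε : 0 ≤ ε)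
    (rc : EuclideanSpace ℝ (Fin 3)) (hrc : ‖rc‖ = 1) (σ : ℝ) (hσ : 0 ≤ σ) :
    ∀ r : EuclideanSpace ℝ (Fin 3), ‖r‖ = 1 → angle r rc ≤ Real.sqrt 2 * σ →
      ∀ t : ℝ,
        (Finset.univ.filter fun i => |⟪-r, p i⟫ + t - q i| ≤ ε).card ≤
          (Finset.univ.filter fun i =>
            -ε + ‖p i‖ * Real.cos (min (angle rc (p i) + Real.sqrt 2 * σ) Real.pi) + q i ≤ t ∧
            t ≤ ε + ‖p i‖ * Real.cos (max (angle rc (p i) - Real.sqrt 2 * σ) 0) + q i).card ∧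
        (Finset.univ.filter fun i => |⟪-r, p i⟫ + t - q i| ≤ ε).card ≤
          ⨆ s : ℝ, (Finset.univ.filter fun i =>
            -ε + ‖p i‖ * Real.cos (min (angle rc (p i) + Real.sqrt 2 * σ) Real.pi) + q i ≤ s ∧
            s ≤ ε + ‖p i‖ * Real.cos (max (angle rc (p i) - Real.sqrt 2 * σ) 0) + q i).card :=
  upper_bound_lower_hemisphere_general p q ε rc σ
end

section
/- (Upper bound for S²) Let {(p_i, q_i)}_{i∈I} be a finite family with p_i ∈ ℝ³ and q_i ∈ ℝ, let ε ≥ 0, let r^c be a unit vector in ℝ³ and σ ≥ 0. For each i set θ_i = ∠(r^c, p_i), t_i⁻ = −ε − ‖p_i‖·cos(max{θ_i − √2σ, 0}) + q_i, t_i⁺ = ε − ‖p_i‖·cos(min{θ_i + √2σ, π}) + q_i, s_i⁻ = −ε + ‖p_i‖·cos(min{θ_i + √2σ, π}) + q_i, and s_i⁺ = ε + ‖p_i‖·cos(max{θ_i − √2σ, 0}) + q_i. Then for every unit vector r ∈ ℝ³ such that ∠(r, r^c) ≤ √2σ or ∠(−r, r^c) ≤ √2σ, and every t ∈ ℝ,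 card{i ∈ I : |⟪r, p_i⟫ + t − q_i| ≤ ε} ≤ max( card{i ∈ I : t_i⁻ ≤ t ≤ t_i⁺}, card{i ∈ I : s_i⁻ ≤ t ≤ s_i⁺} ). -/
/-!
By the triangle inequality for angles, `∠(r, p)` lies within `√2σ` of `∠(r^c, p)` whenever
`∠(r, r^c) ≤ √2σ`, so `⟪r, p⟫ = ‖p‖ cos ∠(r, p)` is squeezed between `‖p‖ cos` of the clamped
angles. An inlier for `(r, t)` then has `t` in the interval `[t⁻, t⁺]`. In the antipodal case
apply this to `-r`, using `⟪r, p⟫ = -⟪-r, p⟫`, which gives the interval `[s⁻, s⁺]`.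
-/

open InnerProductGeometry Set
open scoped RealInnerProductSpace

section AngleBounds

variable {V : Type*} [NormedAddCommGroup V] [InnerProductSpace ℝ V]

lemma angle_mem_Icc_of_angle_le {r c p : V} {δ : ℝ} (h : angle r c ≤ δ) :
    angle r p ∈ Icc (max (angle c p - δ) 0) (min (angle c p + δ) Real.pi) := by
  have h₁ := angle_le_angle_add_angle r c p
  have h₂ := angle_le_angle_add_angle c r p
  rw [angle_comm c r] at h₂
  exact ⟨max_le (by linarith) (angle_nonneg r p), le_min (by linarith) (angle_le_pi r p)⟩

lemma inner_mem_Icc_of_angle_le {r c p : V} {δ : ℝ} (hr : ‖r‖ = 1) (h : angle r c ≤ δ) :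
    ⟪r, p⟫ ∈ Icc (‖p‖ * Real.cos (min (angle c p + δ) Real.pi))
      (‖p‖ * Real.cos (max (angle c p - δ) 0)) := by
  obtain ⟨hlo, hhi⟩ := angle_mem_Icc_of_angle_le (p := p) h
  have hpi : max (angle c p - δ) 0 ≤ Real.pi := hlo.trans (angle_le_pi r p)
  have hinner : ⟪r, p⟫ = ‖p‖ * Real.cos (angle r p) := by
    rw [← cos_angle_mul_norm_mul_norm, hr]; ring
  rw [hinner]
  refine ⟨mul_le_mul_of_nonneg_left ?_ (norm_nonneg p),
    mul_le_mul_of_nonneg_left ?_ (norm_nonneg p)⟩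
  · exact Real.antitoneOn_cos ⟨angle_nonneg r p, angle_le_pi r p⟩
      ⟨(angle_nonneg r p).trans hhi, min_le_right _ _⟩ hhi
  · exact Real.antitoneOn_cos ⟨le_max_right _ _, hpi⟩
      ⟨angle_nonneg r p, angle_le_pi r p⟩ hlo

end AngleBounds

open Classical in
theorem upper_bound_sphere_general {I : Type*} [Fintype I]
    (p : I → EuclideanSpace ℝ (Fin 3)) (q : I → ℝ) (ε : ℝ)
    (rc : EuclideanSpace ℝ (Fin 3)) (σ : ℝ) :
    ∀ r : EuclideanSpace ℝ (Fin 3), ‖r‖ = 1 →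
      (angle r rc ≤ Real.sqrt 2 * σ ∨ angle (-r) rc ≤ Real.sqrt 2 * σ) →
      ∀ t : ℝ,
        (Finset.univ.filter fun i => |⟪r, p i⟫ + t - q i| ≤ ε).card ≤
          max
            (Finset.univ.filter fun i =>
              -ε - ‖p i‖ * Real.cos (max (angle rc (p i) - Real.sqrt 2 * σ) 0) + q i ≤ t ∧
              t ≤ ε - ‖p i‖ * Real.cos (min (angle rc (p i) + Real.sqrt 2 * σ) Real.pi) + q i).card
            (Finset.univ.filter fun i =>
              -ε + ‖p i‖ * Real.cos (min (angle rc (p i) + Real.sqrt 2 * σ) Real.pi) + q i ≤ t ∧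
              t ≤ ε + ‖p i‖ * Real.cos (max (angle rc (p i) - Real.sqrt 2 * σ) 0) + q i).card := by
  intro r hr hcone t
  rcases hcone with hnear | hantipodal
  · refine (Finset.card_le_card fun i => ?_).trans (le_max_left _ _)
    obtain ⟨hlo, hhi⟩ := inner_mem_Icc_of_angle_le (p := p i) hr hnear
    simp only [Finset.mem_filter, Finset.mem_univ, true_and, abs_le]
    rintro ⟨hinlier_lo, hinlier_hi⟩
    constructor <;> linarith
  · refine (Finset.card_le_card fun i => ?_).trans (le_max_right _ _)
    obtain ⟨hlo, hhi⟩ :=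
      inner_mem_Icc_of_angle_le (p := p i) ((norm_neg r).trans hr) hantipodal
    rw [inner_neg_left] at hlo hhi
    simp only [Finset.mem_filter, Finset.mem_univ, true_and, abs_le]
    rintro ⟨hinlier_lo, hinlier_hi⟩
    constructor <;> linarith

open Classical in
theorem upper_bound_sphere {I : Type*} [Fintype I]
    (p : I → EuclideanSpace ℝ (Fin 3)) (q : I → ℝ) (ε : ℝ) (hε : 0 ≤ ε)
    (rc : EuclideanSpace ℝ (Fin 3)) (hrc : ‖rc‖ = 1) (σ : ℝ) (hσ : 0 ≤ σ) :
    ∀ r : EuclideanSpace ℝ (Fin 3), ‖r‖ = 1 →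
      (angle r rc ≤ Real.sqrt 2 * σ ∨ angle (-r) rc ≤ Real.sqrt 2 * σ) →
      ∀ t : ℝ,
        (Finset.univ.filter fun i => |⟪r, p i⟫ + t - q i| ≤ ε).card ≤
          max
            (Finset.univ.filter fun i =>
              -ε - ‖p i‖ * Real.cos (max (angle rc (p i) - Real.sqrt 2 * σ) 0) + q i ≤ t ∧
              t ≤ ε - ‖p i‖ * Real.cos (min (angle rc (p i) + Real.sqrt 2 * σ) Real.pi) + q i).card
            (Finset.univ.filter fun i =>
              -ε + ‖p i‖ * Real.cos (min (angle rc (p i) + Real.sqrt 2 * σ) Real.pi) + q i ≤ t ∧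
              t ≤ ε + ‖p i‖ * Real.cos (max (angle rc (p i) - Real.sqrt 2 * σ) 0) + q i).card :=
  upper_bound_sphere_general p q ε rc σ
end
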